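/- Let F : [0,1]^{n+m} → ℝⁿ be Lipschitz with n ≥ 1, m ≥ 0, and E ⊆ [0,1]^{n+m} measurable. If Ĥ^{n,m}_∞(F,E) = 0, then rank DF(x) ≤ n−1 for Lebesgue-almost all x ∈ E. -/

import Mathlib

open Set MeasureTheory

/-- Hausdorff content `H^n_∞` (with the standard normalization `ω_n (diam/2)^n`). -/
noncomputable def hContent {X : Type*} [EMetricSpace X] (n : ℕ) (E : Set X) : ENNReal :=
  ⨅ (A : ℕ → Set X) (_ : E ⊆ ⋃ i, A i),
    ∑' i, volume (Metric.ball (0 : EuclideanSpace ℝ (Fin n)) 1) / 2 ^ n *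
      (EMetric.diam (A i)) ^ n

/-- The mapping content `Ĥ^{n,m}_∞(F,E)`: infimum of `∑ H^n_∞(F(Aᵢ)) (diam Aᵢ)^m` over
coverings of `E` by arbitrary sets `Aᵢ ⊆ Q₀`. -/
noncomputable def mapContent {X Y : Type*} [EMetricSpace X] [EMetricSpace Y]
    (n m : ℕ) (Q₀ : Set X) (F : X → Y) (E : Set X) : ENNReal :=
  ⨅ (A : ℕ → Set X) (_ : E ⊆ ⋃ i, A i) (_ : ∀ i, A i ⊆ Q₀),
    ∑' i, hContent n (F '' A i) * (EMetric.diam (A i)) ^ m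

/-- The unit cube `[0,1]^d`. -/
def unitCube (d : ℕ) : Set (EuclideanSpace ℝ (Fin d)) := {x | ∀ i, x i ∈ Icc (0:ℝ) 1}

/-!
At a point `x` where `DF(x)` has rank `n`, complete `DF(x)` by a linear map `Q` to `ℝ^m` so that
`(DF(x), Q)` is a linear isomorphism. On the set of points where `F` is uniformly well
approximated by one fixed linear map close to `DF(x)`, the map `y ↦ (F y, Q y)` is expanding at
small scales; hence its piece inside any set `A` has volume at most a constant times
`vol(F(A)) · vol(Q(A)) ≲ H^n_∞(F(A)) (diam A)^m`. Summing over coverings, such pieces are null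
when the mapping content vanishes, and countably many of them cover the points of full rank.
-/

open Module Metric
open scoped ENNReal NNReal

theorem measure_le_measure_ball_mul_ediam_pow {E : Type*} [NormedAddCommGroup E]
    [NormedSpace ℝ E] [FiniteDimensional ℝ E] [MeasurableSpace E] [BorelSpace E]
    (μ : Measure E) [μ.IsAddHaarMeasure] (s : Set E) :
    μ s ≤ μ (ball 0 1) * ediam s ^ finrank ℝ E := by
  rcases Nat.eq_zero_or_pos (finrank ℝ E) with hE | hE
  · have : Subsingleton E := finrank_zero_iff.mp hE
    rw [hE, pow_zero, mul_one]
    exact measure_mono fun x _ => by simp [Subsingleton.elim x 0]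
  rcases s.eq_empty_or_nonempty with rfl | ⟨x₀, hx₀⟩
  · simp
  rcases eq_or_ne (ediam s) ⊤ with hdiam | hdiam
  · simp [hdiam, ENNReal.top_pow hE.ne', ENNReal.mul_top (measure_ball_pos μ 0 one_pos).ne']
  have hs : s ⊆ closedBall x₀ (ediam s).toReal := fun y hy => by
    rw [mem_closedBall, dist_edist]
    exact ENNReal.toReal_mono hdiam (edist_le_ediam_of_mem hy hx₀)
  calc μ s ≤ μ (closedBall x₀ (ediam s).toReal) := measure_mono hs
    _ = μ (ball 0 1) * ediam s ^ finrank ℝ E := by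
      rw [Measure.addHaar_closedBall μ _ ENNReal.toReal_nonneg, mul_comm,
        ENNReal.ofReal_pow ENNReal.toReal_nonneg, ENNReal.ofReal_toReal hdiam]

theorem volume_le_two_pow_mul_hContent {n : ℕ} (s : Set (EuclideanSpace ℝ (Fin n))) :
    volume s ≤ 2 ^ n * hContent n s := by
  have h2 : (2 : ℝ≥0∞) ^ n ≠ 0 := by positivity
  have h2' : (2 : ℝ≥0∞) ^ n ≠ ⊤ := ENNReal.pow_ne_top ENNReal.ofNat_ne_top
  rw [mul_comm, ← ENNReal.div_le_iff_le_mul (Or.inl h2) (Or.inl h2')]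
  refine le_iInf₂ fun A hA => ENNReal.div_le_of_le_mul ?_
  calc volume s ≤ ∑' i, volume (A i) := (measure_mono hA).trans (measure_iUnion_le A)
    _ ≤ ∑' i, volume (ball (0 : EuclideanSpace ℝ (Fin n)) 1) * ediam (A i) ^ n := by
      refine ENNReal.tsum_le_tsum fun i => ?_
      simpa using measure_le_measure_ball_mul_ediam_pow volume (A i)
    _ = (∑' i, volume (ball (0 : EuclideanSpace ℝ (Fin n)) 1) / 2 ^ n * ediam (A i) ^ n) *
        2 ^ n := by
      rw [← ENNReal.tsum_mul_right]
      congr 1 with i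
      rw [mul_right_comm, ENNReal.div_mul_cancel h2 h2']

theorem hausdorffMeasure_le_of_antilipschitzWith_restrict {X Y : Type*} [EMetricSpace X]
    [EMetricSpace Y] [MeasurableSpace X] [BorelSpace X] [MeasurableSpace Y] [BorelSpace Y]
    {f : X → Y} {s : Set X} {K : ℝ≥0} (hf : AntilipschitzWith K (s.domRestrict f)) {d : ℝ}
    (hd : 0 ≤ d) : μH[d] s ≤ K ^ d * μH[d] (f '' s) := by
  have := hf.le_hausdorffMeasure_image hd univ
  rwa [← (isometry_subtype_coe (s := s)).hausdorffMeasure_image (Or.inl hd),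
    Subtype.coe_image_univ, image_univ, range_domRestrict] at this

theorem exists_measure_le_mul_measure_image_of_expanding {X W : Type*}
    [NormedAddCommGroup X] [NormedSpace ℝ X] [FiniteDimensional ℝ X] [MeasurableSpace X]
    [BorelSpace X] [NormedAddCommGroup W] [NormedSpace ℝ W] [FiniteDimensional ℝ W]
    [MeasurableSpace W] [BorelSpace W] (μ : Measure X) (ν : Measure W) [μ.IsAddHaarMeasure]
    [ν.IsAddHaarMeasure] (h : finrank ℝ X = finrank ℝ W) {c : ℝ} (hc : 0 < c) :
    ∃ C : ℝ≥0, ∀ (f : X → W) (s : Set X),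
      (∀ x ∈ s, ∀ y ∈ s, c * dist x y ≤ dist (f x) (f y)) → μ s ≤ C * ν (f '' s) := by
  set K := c⁻¹.toNNReal
  refine ⟨μ.addHaarScalarFactor μH[finrank ℝ X] * K ^ finrank ℝ X *
    (μH[finrank ℝ W] : Measure W).addHaarScalarFactor ν, fun f s hf => ?_⟩
  have hK : AntilipschitzWith K (s.domRestrict f) := .of_le_mul_dist fun x y => by
    rw [Real.coe_toNNReal _ (inv_nonneg.2 hc.le), inv_mul_eq_div, le_div_iff₀' hc]
    exact hf x x.2 y y.2
  have hμ : μ s = μ.addHaarScalarFactor μH[finrank ℝ X] * μH[finrank ℝ X] s := by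
    conv_lhs => rw [Measure.isAddLeftInvariant_eq_smul μ μH[finrank ℝ X]]
    rfl
  have hν : μH[finrank ℝ W] (f '' s) =
      (μH[finrank ℝ W] : Measure W).addHaarScalarFactor ν * ν (f '' s) := by
    conv_lhs => rw [Measure.isAddLeftInvariant_eq_smul (μH[finrank ℝ W] : Measure W) ν]
    rfl
  calc μ s = μ.addHaarScalarFactor μH[finrank ℝ X] * μH[finrank ℝ X] s := hμ
    _ ≤ μ.addHaarScalarFactor μH[finrank ℝ X] * (K ^ finrank ℝ X * μH[finrank ℝ W] (f '' s)) := by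
        gcongr
        rw [h, ← ENNReal.rpow_natCast, ← h]
        exact hausdorffMeasure_le_of_antilipschitzWith_restrict hK (Nat.cast_nonneg _)
    _ = _ := by
        rw [hν]
        push_cast
        ring

theorem measure_eq_zero_of_mapContent_eq_zero {X Y : Type*} [EMetricSpace X] [EMetricSpace Y]
    [MeasurableSpace X] (μ : Measure X) {n m : ℕ} {Ω : Set X} {F : X → Y} {S E : Set X}
    (hSE : S ⊆ E) {C : ℝ≥0∞} (hC : C ≠ ⊤)
    (hS : ∀ A, μ (S ∩ A) ≤ C * (hContent n (F '' A) * ediam A ^ m))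
    (h0 : mapContent n m Ω F E = 0) : μ S = 0 := by
  have : μ S / C ≤ mapContent n m Ω F E := by
    refine le_iInf fun A => le_iInf₂ fun hA _ => ENNReal.div_le_of_le_mul' ?_
    calc μ S ≤ μ (⋃ i, S ∩ A i) := by
          rw [← inter_iUnion]
          exact measure_mono (subset_inter subset_rfl (hSE.trans hA))
      _ ≤ ∑' i, μ (S ∩ A i) := measure_iUnion_le _
      _ ≤ ∑' i, C * (hContent n (F '' A i) * ediam (A i) ^ m) := ENNReal.tsum_le_tsum fun i => hS _
      _ = _ := ENNReal.tsum_mul_left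
  rw [h0, nonpos_iff_eq_zero, ENNReal.div_eq_zero_iff] at this
  exact this.resolve_right hC

section LinearApprox

variable {X Y Z : Type*} [NormedAddCommGroup X] [NormedSpace ℝ X] [NormedAddCommGroup Y]
  [NormedSpace ℝ Y] [NormedAddCommGroup Z] [NormedSpace ℝ Z]

def linearApproxSet (F : X → Y) (D : X →L[ℝ] Y) (ρ r : ℝ) : Set X :=
  {x | ∀ y ∈ closedBall x r, ‖F y - F x - D (y - x)‖ ≤ ρ * ‖y - x‖}

theorem linearApproxSet_subset_of_norm_sub_le {F : X → Y} {D D' : X →L[ℝ] Y} {ρ ε : ℝ}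
    (h : ‖D - D'‖ ≤ ε) (r : ℝ) : linearApproxSet F D ρ r ⊆ linearApproxSet F D' (ρ + ε) r :=
  fun x hx y hy => calc
    ‖F y - F x - D' (y - x)‖ = ‖(F y - F x - D (y - x)) + (D - D') (y - x)‖ := by
        rw [sub_apply]
        abel_nf
    _ ≤ ρ * ‖y - x‖ + ε * ‖y - x‖ :=
        norm_add_le_of_le (hx y hy) ((D - D').le_of_opNorm_le h _)
    _ = (ρ + ε) * ‖y - x‖ := by ring

theorem HasFDerivAt.exists_mem_linearApproxSet {F : X → Y} {D : X →L[ℝ] Y} {x : X}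
    (hD : HasFDerivAt F D x) {ρ : ℝ} (hρ : 0 < ρ) :
    ∃ j : ℕ, x ∈ linearApproxSet F D ρ (1 / (j + 1)) := by
  obtain ⟨δ, hδ, hball⟩ :=
    Metric.eventually_nhds_iff.1 (Asymptotics.isLittleO_iff.1 hD.isLittleO hρ)
  obtain ⟨j, hj⟩ := exists_nat_one_div_lt hδ
  exact ⟨j, fun y hy => hball ((mem_closedBall.1 hy).trans_lt hj)⟩

theorem mul_dist_le_dist_of_mem_linearApproxSet {F : X → Y} {T : X →L[ℝ] Y × Z} {ρ r : ℝ}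
    (hT : ∀ v, 2 * ρ * ‖v‖ ≤ ‖T v‖) {x y : X}
    (hx : x ∈ linearApproxSet F (.comp (.fst ℝ Y Z) T) ρ r) (hy : dist y x ≤ r) :
    ρ * dist x y ≤ dist (F x, (T x).2) (F y, (T y).2) := by
  -- The second component of `(F, (T ·).2)` is linear, so only the error of `F` survives.
  have hsplit : T (y - x) = ((F y, (T y).2) - (F x, (T x).2)) - (F y - F x - (T (y - x)).1, 0) := by
    ext <;> simp
  have hle : ‖T (y - x)‖ ≤ dist (F x, (T x).2) (F y, (T y).2) + ρ * ‖y - x‖ := by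
    rw [hsplit, dist_comm, dist_eq_norm]
    refine norm_sub_le_of_le le_rfl ?_
    simpa using hx y (mem_closedBall.2 hy)
  rw [dist_comm, dist_eq_norm]
  linarith [hT (y - x)]

theorem exists_mul_norm_le_prod_of_surjective [FiniteDimensional ℝ X] [FiniteDimensional ℝ Y]
    [FiniteDimensional ℝ Z] {D : X →L[ℝ] Y} (hD : Function.Surjective D)
    (hdim : finrank ℝ X = finrank ℝ Y + finrank ℝ Z) :
    ∃ Q : X →L[ℝ] Z, ∃ c > 0, ∀ v, c * ‖v‖ ≤ ‖D.prod Q v‖ := by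
  have hker : finrank ℝ (LinearMap.ker (D : X →ₗ[ℝ] Y)) = finrank ℝ Z := by
    have := LinearMap.finrank_range_add_finrank_ker (D : X →ₗ[ℝ] Y)
    rw [LinearMap.range_eq_top.2 hD, finrank_top] at this
    omega
  set e := LinearEquiv.ofFinrankEq _ _ hker
  obtain ⟨g, hg⟩ := LinearMap.exists_extend e.toLinearMap
  set Q := LinearMap.toContinuousLinearMap g
  have hinj : Function.Injective (D.prod Q : X →ₗ[ℝ] Y × Z) := by
    refine (injective_iff_map_eq_zero _).2 fun v hv => ?_
    have hDv : D v = 0 := congrArg Prod.fst hv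
    have : e ⟨v, hDv⟩ = 0 := (LinearMap.congr_fun hg ⟨v, hDv⟩).symm.trans (congrArg Prod.snd hv)
    exact congrArg Subtype.val (e.map_eq_zero_iff.1 this)
  obtain ⟨K, -, hK⟩ := LinearMap.injective_iff_antilipschitz _ |>.1 hinj
  exact ⟨Q, antilipschitzWith_iff_exists_mul_le_norm.1 ⟨K, hK⟩⟩

theorem HasFDerivAt.exists_mem_linearApproxSet_of_surjective [FiniteDimensional ℝ X]
    [FiniteDimensional ℝ Y] [FiniteDimensional ℝ Z] {𝒯 : Set (X →L[ℝ] Y × Z)} (h𝒯 : Dense 𝒯)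
    {F : X → Y} {D : X →L[ℝ] Y} {x : X} (hD : HasFDerivAt F D x) (hsurj : Function.Surjective D)
    (hdim : finrank ℝ X = finrank ℝ Y + finrank ℝ Z) :
    ∃ T ∈ 𝒯, ∃ k j : ℕ, (∀ v, 2 * (1 / (k + 1)) * ‖v‖ ≤ ‖T v‖) ∧
      x ∈ linearApproxSet F (.comp (.fst ℝ Y Z) T) (1 / (k + 1)) (1 / (j + 1)) := by
  obtain ⟨Q, c, hc, hcQ⟩ := exists_mul_norm_le_prod_of_surjective hsurj hdim
  obtain ⟨k, hk⟩ := exists_nat_one_div_lt (by positivity : 0 < c / 3)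
  set ρ : ℝ := 1 / (k + 1)
  have hρ : 0 < ρ := Nat.one_div_pos_of_nat
  obtain ⟨T, hT𝒯, hT⟩ := h𝒯.exists_dist_lt (D.prod Q) (half_pos hρ)
  rw [dist_eq_norm] at hT
  obtain ⟨j, hj⟩ := hD.exists_mem_linearApproxSet (half_pos hρ)
  refine ⟨T, hT𝒯, k, j, fun v => ?_, ?_⟩
  · calc 2 * ρ * ‖v‖ ≤ c * ‖v‖ - ρ / 2 * ‖v‖ := by nlinarith [norm_nonneg v]
      _ ≤ ‖D.prod Q v‖ - ‖(D.prod Q - T) v‖ :=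
          sub_le_sub (hcQ v) ((D.prod Q - T).le_of_opNorm_le hT.le v)
      _ ≤ ‖T v‖ := by
          rw [sub_apply]
          linarith [norm_sub_norm_le (D.prod Q v) (T v), norm_sub_rev (D.prod Q v) (T v)]
  · have hfst : ‖D - (ContinuousLinearMap.fst ℝ Y Z).comp T‖ ≤ ρ / 2 := by
      conv_lhs => rw [← ContinuousLinearMap.fst_comp_prod D Q, ← ContinuousLinearMap.comp_sub]
      exact (ContinuousLinearMap.opNorm_comp_le _ _).trans <| by
        nlinarith [ContinuousLinearMap.norm_fst_le ℝ Y Z, norm_nonneg (D.prod Q - T)]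
    have := linearApproxSet_subset_of_norm_sub_le hfst _ hj
    rwa [add_halves] at this

end LinearApprox

section Expanding

variable {X Z : Type*} [NormedAddCommGroup X] [NormedSpace ℝ X] [FiniteDimensional ℝ X]
  [MeasureSpace X] [BorelSpace X] [(volume : Measure X).IsAddHaarMeasure]
  [NormedAddCommGroup Z] [NormedSpace ℝ Z] [FiniteDimensional ℝ Z]
  [MeasureSpace Z] [BorelSpace Z] [(volume : Measure Z).IsAddHaarMeasure]

theorem volume_eq_zero_of_expanding {n m : ℕ} (hX : finrank ℝ X = n + m)
    (hZ : finrank ℝ Z = m) {Ω E S : Set X} {F : X → EuclideanSpace ℝ (Fin n)}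
    (h0 : mapContent n m Ω F E = 0) (hSE : S ⊆ E) (Q : X →L[ℝ] Z) {c : ℝ} (hc : 0 < c)
    (hS : ∀ x ∈ S, ∀ y ∈ S, c * dist x y ≤ dist (F x, Q x) (F y, Q y)) : volume S = 0 := by
  obtain ⟨C, hC⟩ := exists_measure_le_mul_measure_image_of_expanding (volume : Measure X)
    ((volume : Measure (EuclideanSpace ℝ (Fin n))).prod (volume : Measure Z))
    (by rw [hX, finrank_prod, finrank_euclideanSpace_fin, hZ]) hc
  refine measure_eq_zero_of_mapContent_eq_zero volume hSE
    (C := C * (2 ^ n * (volume (ball (0 : Z) 1) * ‖Q‖₊ ^ m))) (by finiteness) (fun A => ?_) h0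
  calc volume (S ∩ A) ≤ C * (volume.prod volume) ((fun x => (F x, Q x)) '' (S ∩ A)) :=
        hC _ _ fun x hx y hy => hS x hx.1 y hy.1
    _ ≤ C * (volume (F '' A) * volume (Q '' (S ∩ A))) := by
        rw [← Measure.prod_prod]
        gcongr
        rintro _ ⟨x, hx, rfl⟩
        exact ⟨mem_image_of_mem F hx.2, mem_image_of_mem Q hx⟩
    _ ≤ C * (2 ^ n * hContent n (F '' A) * (volume (ball (0 : Z) 1) * (‖Q‖₊ * ediam A) ^ m)) := by
        gcongr
        · exact volume_le_two_pow_mul_hContent _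
        · calc volume (Q '' (S ∩ A)) ≤ volume (ball (0 : Z) 1) * ediam (Q '' (S ∩ A)) ^ m := by
                rw [← hZ]
                exact measure_le_measure_ball_mul_ediam_pow volume _
            _ ≤ volume (ball (0 : Z) 1) * (‖Q‖₊ * ediam A) ^ m := by
                gcongr
                exact (Q.lipschitz.ediam_image_le _).trans (by gcongr; exact inter_subset_right)
    _ = _ := by
        rw [mul_pow]
        ring

theorem volume_inter_linearApproxSet_eq_zero {n m : ℕ} (hX : finrank ℝ X = n + m)
    (hZ : finrank ℝ Z = m) {Ω E : Set X} {F : X → EuclideanSpace ℝ (Fin n)}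
    (h0 : mapContent n m Ω F E = 0) {T : X →L[ℝ] EuclideanSpace ℝ (Fin n) × Z} {ρ r : ℝ}
    (hρ : 0 < ρ) (hr : 0 < r) (hT : ∀ v, 2 * ρ * ‖v‖ ≤ ‖T v‖) :
    volume (E ∩ linearApproxSet F (.comp (.fst ℝ _ Z) T) ρ r) = 0 := by
  refine measure_null_of_locally_null _ fun x _ => ⟨_ ∩ ball x (r / 2),
    inter_mem_nhdsWithin _ (ball_mem_nhds x (half_pos hr)), ?_⟩
  refine volume_eq_zero_of_expanding hX hZ h0 (inter_subset_left.trans inter_subset_left)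
    (.comp (.snd ℝ _ Z) T) hρ fun y hy z hz => ?_
  refine mul_dist_le_dist_of_mem_linearApproxSet hT hy.1.2 ?_
  linarith [dist_triangle_right z y x, mem_ball.1 hy.2, mem_ball.1 hz.2]

theorem volume_setOf_surjective_hasFDerivAt_eq_zero {n m : ℕ} (hX : finrank ℝ X = n + m)
    {Ω E : Set X} {F : X → EuclideanSpace ℝ (Fin n)} (h0 : mapContent n m Ω F E = 0) :
    volume {x ∈ E | ∃ D : X →L[ℝ] EuclideanSpace ℝ (Fin n),
      HasFDerivAt F D x ∧ Function.Surjective D} = 0 := by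
  obtain ⟨𝒯, h𝒯c, h𝒯d⟩ := TopologicalSpace.exists_countable_dense
    (X →L[ℝ] EuclideanSpace ℝ (Fin n) × EuclideanSpace ℝ (Fin m))
  refine measure_mono_null (t := ⋃ T ∈ 𝒯, ⋃ (k : ℕ) (j : ℕ)
    (_ : ∀ v, 2 * (1 / (k + 1)) * ‖v‖ ≤ ‖T v‖),
    E ∩ linearApproxSet F (.comp (.fst ℝ _ _) T) (1 / (k + 1)) (1 / (j + 1))) ?_ ?_
  · rintro x ⟨hxE, D, hD, hsurj⟩
    obtain ⟨T, hT𝒯, k, j, hT, hx⟩ := hD.exists_mem_linearApproxSet_of_surjective h𝒯d hsurj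
      (by simp only [hX, finrank_euclideanSpace_fin])
    exact mem_biUnion hT𝒯 (mem_iUnion₂.2 ⟨k, j, mem_iUnion.2 ⟨hT, hxE, hx⟩⟩)
  · refine (measure_biUnion_null_iff h𝒯c).2 fun T _ => measure_iUnion_null fun k =>
      measure_iUnion_null fun j => measure_iUnion_null fun hT => ?_
    exact volume_inter_linearApproxSet_eq_zero hX finrank_euclideanSpace_fin h0
      Nat.one_div_pos_of_nat Nat.one_div_pos_of_nat hT

end Expanding

theorem stmt_12_general (n m : ℕ)
    (F : EuclideanSpace ℝ (Fin (n + m)) → EuclideanSpace ℝ (Fin n))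
    (E : Set (EuclideanSpace ℝ (Fin (n + m))))
    (h0 : mapContent n m (unitCube (n + m)) F E = 0) :
    ∀ᵐ x ∂(volume : Measure (EuclideanSpace ℝ (Fin (n + m)))), x ∈ E →
      ∀ D : EuclideanSpace ℝ (Fin (n + m)) →L[ℝ] EuclideanSpace ℝ (Fin n),
        HasFDerivAt F D x → Module.finrank ℝ (LinearMap.range D.toLinearMap) ≤ n - 1 := by
  refine ae_iff.2 (measure_mono_null ?_
    (volume_setOf_surjective_hasFDerivAt_eq_zero finrank_euclideanSpace_fin h0))
  intro x hx
  push Not at hx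
  obtain ⟨hxE, D, hD, hrank⟩ := hx
  have hle : finrank ℝ (LinearMap.range D.toLinearMap) ≤ n :=
    (Submodule.finrank_le _).trans finrank_euclideanSpace_fin.le
  refine ⟨hxE, D, hD, LinearMap.range_eq_top.1 (Submodule.eq_top_of_finrank_eq ?_)⟩
  rw [finrank_euclideanSpace_fin]
  omega

/-- If `F : [0,1]^{n+m} → ℝⁿ` is Lipschitz, `E` measurable with `Ĥ^{n,m}_∞(F,E) = 0`,
then `rank DF(x) ≤ n−1` for almost all `x ∈ E`. -/
theorem stmt_12 (n m : ℕ) (hn : 1 ≤ n) (K : NNReal)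
    (F : EuclideanSpace ℝ (Fin (n + m)) → EuclideanSpace ℝ (Fin n))
    (hF : LipschitzOnWith K F (unitCube (n + m)))
    (E : Set (EuclideanSpace ℝ (Fin (n + m)))) (hE : MeasurableSet E)
    (hEQ : E ⊆ unitCube (n + m))
    (h0 : mapContent n m (unitCube (n + m)) F E = 0) :
    ∀ᵐ x ∂(volume : Measure (EuclideanSpace ℝ (Fin (n + m)))), x ∈ E →
      ∀ D : EuclideanSpace ℝ (Fin (n + m)) →L[ℝ] EuclideanSpace ℝ (Fin n),
        HasFDerivAt F D x → Module.finrank ℝ (LinearMap.range D.toLinearMap) ≤ n - 1 :=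
  stmt_12_general n m F E h0
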